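/- In the reduction from Diverse Knapsack to λ-Median Utilitarian Knapsack that adds λ−1 new items P_new, each of cost 1, with utilities strictly greater than any original item's utility for every voter, and sets budget b' = b + λ − 1: the original instance admits a bundle S ⊆ P of cost at most b with ∑_{v∈V} max_{p∈S} util_v(p) ≥ u_tgt (u_tgt > 0) if and only if the new instance admits a bundle S' ⊆ P ∪ P_new of cost at most b' with ∑_{v∈V} sat_v^λ(S') ≥ u_tgt. -/

import Mathlib

/-!
A voter's λ-median satisfaction is at least `a > 0` exactly when at least λ items of the bundle
give that voter utility at least `a`.

Forward: add all λ - 1 new items to `S`. For each voter, its favourite item of `S` and the new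
items, which it likes at least as much, are λ items of utility at least `max_{p ∈ S} util_v p`.

Backward: if `S'` contains `k ≤ λ - 1` new items, drop `λ - 1 - k` original items (each of cost at
least 1) to get back within budget `b`. A voter with λ-median satisfaction `m > 0` has at least
λ items of utility at least `m` in `S'`, at most `k` of them new, so more than `λ - 1 - k`
original ones, and one of them survives.
-/

/-- λ-median satisfaction: the λ-th largest utility among items of `Z`, `0` if `|Z| < λ`. -/
def medSat {Q : Type*} (util : Q → ℕ) (lam : ℕ) (Z : Finset Q) : ℕ :=
  if 1 ≤ lam ∧ lam ≤ Z.card then ((Z.val.map util).sort (· ≤ ·)).getD (Z.card - lam) 0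
  else 0

open Finset

theorem List.Pairwise.le_getElem_iff_length_sub_le_countP {α : Type*} [LinearOrder α]
    {L : List α} (hL : L.Pairwise (· ≤ ·)) {i : ℕ} (hi : i < L.length) (a : α) :
    a ≤ L[i] ↔ L.length - i ≤ L.countP (a ≤ ·) := by
  induction L generalizing i with
  | nil => simp at hi
  | cons x xs ih =>
    obtain ⟨hx, hxs⟩ := List.pairwise_cons.1 hL
    by_cases hax : a ≤ x
    · have hall : ∀ y ∈ x :: xs, a ≤ y :=
        List.forall_mem_cons.2 ⟨hax, fun y hy => hax.trans (hx y hy)⟩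
      have hcount : (x :: xs).countP (a ≤ ·) = (x :: xs).length :=
        List.countP_eq_length.2 fun y hy => decide_eq_true (hall y hy)
      simp only [hcount, hall _ (List.getElem_mem hi), true_iff]
      omega
    · rw [List.countP_cons_of_neg (by simpa using hax)]
      cases i with
      | zero => simpa [hax] using List.countP_le_length
      | succ i => simpa using ih hxs (by simpa using hi)

theorem le_medSat_iff {Q : Type*} (util : Q → ℕ) {lam : ℕ} (hlam : 1 ≤ lam) (Z : Finset Q)
    {a : ℕ} (ha : 0 < a) : a ≤ medSat util lam Z ↔ lam ≤ #{q ∈ Z | a ≤ util q} := by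
  unfold medSat
  split_ifs with h
  · set L := (Z.val.map util).sort (· ≤ ·)
    have hlen : L.length = #Z := by simp [L, Multiset.length_sort]
    have hcount : L.countP (a ≤ ·) = #{q ∈ Z | a ≤ util q} := by
      rw [← Multiset.coe_countP, Multiset.sort_eq, Multiset.countP_map]
      rfl
    rw [List.getD_eq_getElem _ _ (by omega),
      (Multiset.pairwise_sort _ _).le_getElem_iff_length_sub_le_countP, hlen, hcount]
    omega
  · have := card_filter_le Z (a ≤ util ·)
    omega

theorem sup_le_medSat_disjSum {P R : Type*} (u : P ⊕ R → ℕ) (S : Finset P) (T : Finset R)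
    (hle : ∀ p r, u (.inl p) ≤ u (.inr r)) :
    S.sup (u ∘ Sum.inl) ≤ medSat u (#T + 1) (S.disjSum T) := by
  rcases Nat.eq_zero_or_pos (S.sup (u ∘ Sum.inl)) with h0 | hpos
  · simp [h0]
  have hS : S.Nonempty := nonempty_iff_ne_empty.2 (by rintro rfl; simp at hpos)
  obtain ⟨p, hpS, hp⟩ := exists_mem_eq_sup S hS (u ∘ Sum.inl)
  rw [le_medSat_iff u (by omega) _ hpos]
  calc #T + 1 = #(({p} : Finset P).disjSum T) := by simp [add_comm]
    _ ≤ _ := card_le_card fun q hq => ?_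
  rcases q with q | r <;> simp only [inl_mem_disjSum, inr_mem_disjSum, mem_singleton] at hq
  · subst hq
    simp [hpS, hp]
  · simpa [hq, hp] using hle p r

theorem medSat_le_sup_sdiff {P R : Type*} [DecidableEq P] (u : P ⊕ R → ℕ) (S' : Finset (P ⊕ R))
    {D : Finset P} {lam : ℕ} (hD : #D + #S'.toRight < lam) :
    medSat u lam S' ≤ (S'.toLeft \ D).sup (u ∘ Sum.inl) := by
  set m := medSat u lam S'
  rcases Nat.eq_zero_or_pos m with h0 | hpos
  · simp [h0]
  set F := {q ∈ S' | m ≤ u q}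
  have hF : lam ≤ #F := (le_medSat_iff u (by omega) S' hpos).1 le_rfl
  have hFright : #F.toRight ≤ #S'.toRight :=
    card_le_card (toRight_subset_toRight (filter_subset _ _))
  have hFsplit : #F.toLeft + #F.toRight = #F := card_toLeft_add_card_toRight
  have hFD : ¬ F.toLeft ⊆ D := fun h => by have := card_le_card h; omega
  obtain ⟨p, hpF, hpD⟩ := not_subset.1 hFD
  simp only [F, mem_toLeft, mem_filter] at hpF
  exact hpF.2.trans (le_sup (f := u ∘ Sum.inl) (mem_sdiff.2 ⟨mem_toLeft.2 hpF.1, hpD⟩))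

theorem exists_subset_card_le_sum_sdiff_le {P : Type*} [DecidableEq P] {c : P → ℕ} {S : Finset P}
    (hc : ∀ p ∈ S, 1 ≤ c p) {b r : ℕ} (h : ∑ p ∈ S, c p ≤ b + r) :
    ∃ D ⊆ S, #D ≤ r ∧ ∑ p ∈ S \ D, c p ≤ b := by
  by_cases hr : r ≤ #S
  · obtain ⟨D, hDS, hD⟩ := exists_subset_card_eq hr
    have hsplit : ∑ p ∈ S \ D, c p + ∑ p ∈ D, c p = ∑ p ∈ S, c p := sum_sdiff hDS
    have hcard : #D ≤ ∑ p ∈ D, c p := by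
      simpa using card_nsmul_le_sum D c 1 fun p hp => hc p (hDS hp)
    exact ⟨D, hDS, hD.le, by omega⟩
  · exact ⟨S, subset_rfl, by omega, by simp⟩

theorem sum_elim_one_eq_sum_toLeft_add_card_toRight {P R : Type*} (c : P → ℕ)
    (U : Finset (P ⊕ R)) :
    ∑ q ∈ U, Sum.elim c (fun _ => 1) q = ∑ p ∈ U.toLeft, c p + #U.toRight := by
  conv_lhs => rw [← toLeft_disjSum_toRight (u := U)]
  simp [sum_disjSum]

theorem stmt3_general {P V : Type*} [Fintype V] [DecidableEq P]
    (l : ℕ) (c : P → ℕ) (hc : ∀ p, 1 ≤ c p)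
    (util : V → P → ℕ) (util' : V → P ⊕ Fin l → ℕ)
    (hagree : ∀ v p, util' v (Sum.inl p) = util v p)
    (hbig : ∀ (v : V) (j : Fin l) (p : P), util v p < util' v (Sum.inr j))
    (b tgt : ℕ) :
    (∃ S : Finset P, (∑ p ∈ S, c p) ≤ b ∧ tgt ≤ ∑ v : V, S.sup (util v)) ↔
    (∃ S' : Finset (P ⊕ Fin l),
      (∑ q ∈ S', Sum.elim c (fun _ => 1) q) ≤ b + l ∧
      tgt ≤ ∑ v : V, medSat (util' v) (l + 1) S') := by
  obtain rfl : util = fun v => util' v ∘ Sum.inl := by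
    ext v p
    exact (hagree v p).symm
  simp only [sum_elim_one_eq_sum_toLeft_add_card_toRight]
  constructor
  · rintro ⟨S, hcost, hsat⟩
    refine ⟨S.disjSum univ, by simpa using hcost, hsat.trans (sum_le_sum fun v _ => ?_)⟩
    simpa using sup_le_medSat_disjSum (util' v) S univ fun p j => (hbig v j p).le
  · rintro ⟨S', hcost, hsat⟩
    have hright : #S'.toRight ≤ l := by simpa using card_le_univ S'.toRight
    obtain ⟨D, -, hD, hDcost⟩ := exists_subset_card_le_sum_sdiff_le (S := S'.toLeft)
      (fun p _ => hc p) (b := b) (r := l - #S'.toRight) (by omega)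
    exact ⟨S'.toLeft \ D, hDcost,
      hsat.trans (sum_le_sum fun v _ => medSat_le_sup_sdiff (util' v) S' (by omega))⟩

/-- Correctness of the reduction from Diverse Knapsack to λ-median Utilitarian Knapsack:
adding `l = λ - 1` new items (here `λ = l + 1`), each of cost 1, whose utilities strictly
exceed every original item's utility for every voter (and are strictly increasing among
themselves), and raising the budget to `b + l`, preserves yes-instances in both directions. -/
theorem stmt3 {P V : Type*} [Fintype P] [Fintype V] [DecidableEq P]
    (l : ℕ) (c : P → ℕ) (hc : ∀ p, 1 ≤ c p)
    (util : V → P → ℕ) (util' : V → P ⊕ Fin l → ℕ)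
    (hagree : ∀ v p, util' v (Sum.inl p) = util v p)
    (hbig : ∀ (v : V) (j : Fin l) (p : P), util v p < util' v (Sum.inr j))
    (hmono : ∀ (v : V) (j j' : Fin l), j < j' → util' v (Sum.inr j) < util' v (Sum.inr j'))
    (b tgt : ℕ) (htgt : 0 < tgt) :
    (∃ S : Finset P, (∑ p ∈ S, c p) ≤ b ∧ tgt ≤ ∑ v : V, S.sup (util v)) ↔
    (∃ S' : Finset (P ⊕ Fin l),
      (∑ q ∈ S', Sum.elim c (fun _ => 1) q) ≤ b + l ∧
      tgt ≤ ∑ v : V, medSat (util' v) (l + 1) S') :=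
  stmt3_general l c hc util util' hagree hbig b tgt
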